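/- The weighted-configuration identity holds for g = 6 and w = 1: for any set S of 6 distinct real numbers, the sum over all weighted configurations of S with total weight 1 of their evaluations is zero. -/

import Mathlib

open Finset Polynomial

/-- The unsigned Stirling number of the first kind `[n, k]`, defined as the coefficient of
`x^k` in the ascending factorial `x (x+1) ⋯ (x+n-1)`. -/
noncomputable def stirling1 (n k : ℕ) : ℕ := (ascPochhammer ℕ n).coeff k

/-- `IsStirlingPoly P` says that for every `w`, `P w` is the (unique) real polynomial of degree
at most `2w` with `(P w).eval n = [n, n-w]` (unsigned Stirling number of the first kind) for
every integer `n ≥ w`; i.e. `P w` plays the role of `P_w` from the paper. -/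
def IsStirlingPoly (P : ℕ → Polynomial ℝ) : Prop :=
  ∀ w : ℕ, (P w).natDegree ≤ 2 * w ∧
    ∀ n : ℕ, w ≤ n → (P w).eval (n : ℝ) = (stirling1 n (n - w) : ℝ)

open scoped Classical in
/-- The sum, over all weighted configurations of the finite set `S` with total weight `w`, of
their evaluations.  A weighted configuration is recorded as a length `r` together with an
`r`-tuple `f`, where `(f i).1 = Sᵢ` are the (nonempty, pairwise disjoint, covering `S`) parts
of the configuration and `(f i).2 = wᵢ` are their weights, `∑ i, wᵢ = w`.  Its evaluation is
`(-1)^r · (1/r) · ∏ i, P_{wᵢ}(tᵢ)` where `tᵢ = ∑ c ∈ Sᵢ, c`.  (Since the parts are nonempty and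
pairwise disjoint, `r ≤ S.card`, and each weight is at most `w`, so every weighted
configuration occurs exactly once in the sum below.) -/
noncomputable def weightedConfigSum (P : ℕ → Polynomial ℝ) (S : Finset ℝ) (w : ℕ) : ℝ :=
  ∑ r ∈ Finset.range (S.card + 1),
    ∑ f ∈ (Fintype.piFinset fun _ : Fin r => S.powerset ×ˢ Finset.range (w + 1)).filter
        (fun f => (∀ i, ((f i).1).Nonempty) ∧
          (∀ i j, i ≠ j → Disjoint (f i).1 (f j).1) ∧
          (Finset.univ.biUnion fun i => (f i).1) = S ∧
          ∑ i, (f i).2 = w),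
      (-1 : ℝ) ^ r * (1 / (r : ℝ)) * ∏ i, (P (f i).2).eval (∑ c ∈ (f i).1, c)

/-!
With total weight `1` exactly one part carries weight `1`, and `P₀ = 1`, `P₁(x) = x(x-1)/2`.
By symmetry we may move the weighted part to the front and peel it off as a block `B`; this
turns the sum into `-∑_B (∑_r (-1)^r N_r(S \ B)) P₁(t_B)`, where `N_r(T)` counts ordered
partitions of `T` into `r` blocks. Peeling off the first block also shows
`∑_r (-1)^r N_r(T) = (-1)^|T|`, so the sum is `±∑_{B ⊆ S} (-1)^|B| P₁(t_B)`: an iterated finite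
difference of order `|S|` of a quadratic, which vanishes as soon as `|S| ≥ 3`.
-/

theorem stirling1_self (n : ℕ) : stirling1 n n = 1 := by
  simpa [stirling1, ascPochhammer_natDegree] using (monic_ascPochhammer ℕ n).coeff_natDegree

theorem two_mul_stirling1_succ_self (n : ℕ) : 2 * stirling1 (n + 1) n = (n + 1) * n := by
  induction n with
  | zero => simp [stirling1]
  | succ n ih =>
    have hrec : stirling1 (n + 2) (n + 1) =
        stirling1 (n + 1) n + (n + 1) * stirling1 (n + 1) (n + 1) := by
      rw [stirling1, ascPochhammer_succ_right, mul_add, coeff_add, coeff_mul_X, ← C_eq_natCast,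
        coeff_mul_C, mul_comm]
      rfl
    rw [hrec, stirling1_self, Nat.mul_add, ih]
    ring

theorem IsStirlingPoly.eval_zero {P : ℕ → ℝ[X]} (hP : IsStirlingPoly P) (x : ℝ) :
    (P 0).eval x = 1 := by
  obtain ⟨hdeg, hval⟩ := hP 0
  rw [eq_C_of_natDegree_le_zero hdeg, eval_C, coeff_zero_eq_eval_zero]
  simpa [stirling1_self] using hval 0 le_rfl

theorem IsStirlingPoly.eval_one {P : ℕ → ℝ[X]} (hP : IsStirlingPoly P) (x : ℝ) :
    (P 1).eval x = x * (x - 1) / 2 := by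
  suffices P 1 = C (1 / 2) * (X * X - X) by simp [this]; ring
  refine eq_of_infinite_eval_eq _ _ <|
    Set.Infinite.mono (s := Set.range fun n : ℕ => (n + 1 : ℝ)) ?_
      (Set.infinite_range_of_injective fun a b hab => by simpa using hab)
  rintro _ ⟨n, rfl⟩
  have hval := (hP 1).2 (n + 1) (by omega)
  have hstir : (2 * stirling1 (n + 1) n : ℕ) = ((n + 1) * n : ℝ) := by
    exact_mod_cast two_mul_stirling1_succ_self n
  push_cast at hval hstir
  simp only [Set.mem_ofPred_eq, hval, eval_mul, eval_C, eval_sub, eval_X]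
  linarith

theorem natDegree_taylor_sub_lt {R : Type*} [CommRing R] {p : R[X]} {a : R}
    (h : taylor a p - p ≠ 0) : (taylor a p - p).natDegree < p.natDegree := by
  have hp : taylor a p ≠ 0 := by rw [Ne, taylor_eq_zero]; rintro rfl; simp at h
  exact natDegree_lt_natDegree h <| (degree_taylor p a).symm ▸
    degree_sub_lt_left (degree_taylor p a) hp (leadingCoeff_taylor _ _)

theorem sum_powerset_neg_one_pow_card_mul_eval_eq_zero {R : Type*} [CommRing R] (T : Finset R)
    (p : R[X]) (hp : p.natDegree < T.card) :
    ∑ B ∈ T.powerset, (-1) ^ B.card * p.eval (∑ c ∈ B, c) = 0 := by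
  classical
  induction T using Finset.induction_on generalizing p with
  | empty => simp at hp
  | insert a T ha ih =>
    calc ∑ B ∈ (insert a T).powerset, (-1) ^ B.card * p.eval (∑ c ∈ B, c)
        = -∑ B ∈ T.powerset, (-1) ^ B.card * (taylor a p - p).eval (∑ c ∈ B, c) := by
          rw [sum_powerset_insert ha, ← sum_neg_distrib, ← sum_add_distrib]
          refine sum_congr rfl fun B hB => ?_
          have haB : a ∉ B := fun h => ha (mem_powerset.mp hB h)
          rw [card_insert_of_notMem haB, sum_insert haB, eval_sub, taylor_eval, add_comm a]
          ring
      _ = 0 := by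
          rw [neg_eq_zero]
          by_cases hd : taylor a p - p = 0
          · simp [hd]
          · rw [card_insert_of_notMem ha] at hp
            exact ih _ (by have := natDegree_taylor_sub_lt hd; omega)

theorem neg_one_pow_card_sdiff {M α : Type*} [Monoid M] [HasDistribNeg M] [DecidableEq α]
    {B T : Finset α} (hBT : B ⊆ T) : (-1 : M) ^ #(T \ B) = (-1) ^ #T * (-1) ^ #B := by
  rw [← card_sdiff_add_card_eq_card hBT, pow_add, mul_assoc, ← pow_add, ← two_mul, pow_mul,
    neg_one_sq, one_pow, mul_one]

theorem filter_nonempty_powerset {α : Type*} [DecidableEq α] (T : Finset α) :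
    T.powerset.filter Finset.Nonempty = T.powerset.erase ∅ := by
  ext B
  simp [nonempty_iff_ne_empty, and_comm]

theorem sum_filter_nonempty_powerset_neg_one_pow {α : Type*} [DecidableEq α] (T : Finset α) :
    ∑ B ∈ T.powerset.filter Finset.Nonempty, (-1 : ℤ) ^ #B = if T = ∅ then 0 else -1 := by
  rw [filter_nonempty_powerset, sum_erase_eq_sub (empty_mem_powerset T),
    sum_powerset_neg_one_pow_card]
  split_ifs <;> simp

section OrderedPartitions

variable {α : Type*} [DecidableEq α]

def orderedPartitions (r : ℕ) (T : Finset α) : Finset (Fin r → Finset α) :=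
  (Fintype.piFinset fun _ => T.powerset).filter fun g =>
    (∀ i, (g i).Nonempty) ∧ (∀ i j, i ≠ j → Disjoint (g i) (g j)) ∧ univ.biUnion g = T

theorem mem_orderedPartitions {r : ℕ} {T : Finset α} {g : Fin r → Finset α} :
    g ∈ orderedPartitions r T ↔
      (∀ i, (g i).Nonempty) ∧ (∀ i j, i ≠ j → Disjoint (g i) (g j)) ∧ univ.biUnion g = T := by
  rw [orderedPartitions, mem_filter, and_iff_right_iff_imp]
  rintro ⟨-, -, rfl⟩
  exact Fintype.mem_piFinset.mpr fun i => mem_powerset.mpr (subset_biUnion_of_mem g (mem_univ i))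

theorem orderedPartitions_zero (T : Finset α) :
    orderedPartitions 0 T = if T = ∅ then {finZeroElim} else ∅ := by
  ext g
  rw [mem_orderedPartitions, Subsingleton.elim g finZeroElim]
  split_ifs with hT <;> simp [eq_comm, hT]

theorem comp_perm_mem_orderedPartitions {r : ℕ} {T : Finset α} {g : Fin r → Finset α}
    (hg : g ∈ orderedPartitions r T) (σ : Equiv.Perm (Fin r)) :
    g ∘ σ ∈ orderedPartitions r T := by
  obtain ⟨hne, hdisj, hcov⟩ := mem_orderedPartitions.mp hg
  refine mem_orderedPartitions.mpr
    ⟨fun i => hne _, fun i j hij => hdisj _ _ (σ.injective.ne hij), ?_⟩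
  ext x
  simp only [← hcov, mem_biUnion, mem_univ, true_and, Function.comp_apply]
  exact (σ.surjective.exists (p := fun i => x ∈ g i)).symm

theorem cons_mem_orderedPartitions {r : ℕ} {T B : Finset α} {h : Fin r → Finset α} :
    Fin.cons B h ∈ orderedPartitions (r + 1) T ↔
      (B ⊆ T ∧ B.Nonempty) ∧ h ∈ orderedPartitions r (T \ B) := by
  have hcov : univ.biUnion (Fin.cons B h : Fin (r + 1) → Finset α) = B ∪ univ.biUnion h := by
    ext x; simp [Fin.exists_fin_succ]
  simp only [mem_orderedPartitions, Fin.forall_fin_succ, Fin.cons_zero, Fin.cons_succ, ne_eq,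
    not_true, IsEmpty.forall_iff, Fin.succ_ne_zero, not_false_eq_true, forall_const, Fin.succ_inj,
    hcov, disjoint_comm (b := B)]
  constructor
  · rintro ⟨⟨hB, hne⟩, ⟨-, hdisj⟩, hcup⟩
    have hBU : Disjoint B (univ.biUnion h) :=
      (disjoint_biUnion_right _ _ _).mpr fun i _ => (hdisj i).1
    refine ⟨⟨hcup ▸ subset_union_left, hB⟩, hne, fun i => (hdisj i).2, ?_⟩
    rw [← hcup, union_sdiff_left, hBU.symm.sdiff_eq_left]
  · rintro ⟨⟨hBT, hB⟩, hne, hdisj, hU⟩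
    have hBU (i : Fin r) : Disjoint B (h i) :=
      disjoint_sdiff.mono_right (hU ▸ subset_biUnion_of_mem h (mem_univ i))
    exact ⟨⟨hB, hne⟩, ⟨⟨trivial, fun i _ => hBU i⟩, fun i => ⟨hBU i, hdisj i⟩⟩,
      by rw [hU, union_sdiff_of_subset hBT]⟩

theorem sum_orderedPartitions_succ {β : Type*} [AddCommMonoid β] (r : ℕ) (T : Finset α)
    (F : (Fin (r + 1) → Finset α) → β) :
    ∑ g ∈ orderedPartitions (r + 1) T, F g =
      ∑ B ∈ T.powerset.filter Finset.Nonempty,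
        ∑ h ∈ orderedPartitions r (T \ B), F (Fin.cons B h) := by
  rw [sum_sigma']
  refine (sum_nbij' (fun g => ⟨g 0, Fin.tail g⟩) (fun x => Fin.cons x.1 x.2) ?_ ?_ ?_ ?_ ?_)
  · intro g hg
    rw [← Fin.cons_self_tail g, cons_mem_orderedPartitions] at hg
    simpa [mem_sigma] using hg
  · rintro ⟨B, h⟩ hx
    simpa [cons_mem_orderedPartitions, mem_sigma] using hx
  · intro g _
    exact Fin.cons_self_tail g
  · rintro ⟨B, h⟩ _
    simp
  · intro g _
    rw [Fin.cons_self_tail]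

theorem sum_orderedPartitions_apply_eq {β : Type*} [AddCommMonoid β] {r : ℕ} (T : Finset α)
    (φ : Finset α → β) (i j : Fin r) :
    ∑ g ∈ orderedPartitions r T, φ (g i) = ∑ g ∈ orderedPartitions r T, φ (g j) := by
  refine sum_nbij' (· ∘ Equiv.swap i j) (· ∘ Equiv.swap i j)
    (fun g hg => comp_perm_mem_orderedPartitions hg _)
    (fun g hg => comp_perm_mem_orderedPartitions hg _) (fun g _ => ?_) (fun g _ => ?_)
    (fun g _ => ?_)
  all_goals simp [Function.comp_def]

theorem sum_orderedPartitions_sum_apply {β : Type*} [AddCommMonoid β] (r : ℕ) (T : Finset α)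
    (φ : Finset α → β) :
    ∑ g ∈ orderedPartitions (r + 1) T, ∑ i, φ (g i) =
      (r + 1) • ∑ B ∈ T.powerset.filter Finset.Nonempty,
        #(orderedPartitions r (T \ B)) • φ B := by
  rw [sum_comm, sum_congr rfl fun i _ => sum_orderedPartitions_apply_eq T φ i 0, sum_const,
    card_univ, Fintype.card_fin, sum_orderedPartitions_succ]
  simp only [Fin.cons_zero, sum_const]

theorem card_orderedPartitions_succ (r : ℕ) (T : Finset α) :
    #(orderedPartitions (r + 1) T) =
      ∑ B ∈ T.powerset.filter Finset.Nonempty, #(orderedPartitions r (T \ B)) := by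
  simp only [card_eq_sum_ones, sum_orderedPartitions_succ r T (fun _ => 1)]

theorem sum_range_neg_one_pow_mul_card_orderedPartitions (T : Finset α) {R : ℕ}
    (hR : #T < R) : ∑ r ∈ range R, (-1 : ℤ) ^ r * #(orderedPartitions r T) = (-1) ^ #T := by
  induction T using Finset.strongInduction generalizing R with
  | H T ih =>
  obtain ⟨R, rfl⟩ : ∃ R', R = R' + 1 := ⟨R - 1, by omega⟩
  have hsub (B) (hB : B ∈ T.powerset.filter Finset.Nonempty) :
      ∑ r ∈ range R, (-1 : ℤ) ^ r * #(orderedPartitions r (T \ B)) = (-1) ^ #T * (-1) ^ #B := by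
    obtain ⟨hBT, hB⟩ := mem_filter.mp hB
    rw [mem_powerset] at hBT
    have hlt : #(T \ B) < #T := card_lt_card (sdiff_ssubset hBT hB)
    rw [ih _ (sdiff_ssubset hBT hB) (by omega), neg_one_pow_card_sdiff hBT]
  calc ∑ r ∈ range (R + 1), (-1 : ℤ) ^ r * #(orderedPartitions r T)
      = (if T = ∅ then 1 else 0) -
          ∑ B ∈ T.powerset.filter Finset.Nonempty,
            ∑ r ∈ range R, (-1 : ℤ) ^ r * #(orderedPartitions r (T \ B)) := by
        simp only [sum_range_succ', orderedPartitions_zero, card_orderedPartitions_succ,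
          Nat.cast_sum, mul_sum, sub_eq_add_neg, ← sum_neg_distrib]
        rw [sum_comm, add_comm]
        congr 1
        · split_ifs <;> simp
        · exact sum_congr rfl fun _ _ => sum_congr rfl fun _ _ => by ring
    _ = (-1) ^ #T := by
        rw [sum_congr rfl hsub, ← mul_sum, sum_filter_nonempty_powerset_neg_one_pow]
        split_ifs with hT <;> simp [hT]

end OrderedPartitions

theorem exists_eq_pi_single_of_sum_eq_one {ι : Type*} [Fintype ι] [DecidableEq ι] {a : ι → ℕ}
    (h : ∑ i, a i = 1) : ∃ i, a = Pi.single i 1 := by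
  obtain ⟨i, hi⟩ := (Finsupp.sum_eq_one_iff (Finsupp.equivFunOnFinite.symm a)).mp
    (by simpa [Finsupp.sum_fintype] using h)
  exact ⟨i, by simpa [Finsupp.single_eq_pi_single] using congrArg DFunLike.coe hi⟩

open scoped Classical in
theorem sum_weight_one_configurations {α β : Type*} [DecidableEq α] [AddCommMonoid β]
    (S : Finset α) (r : ℕ) (F : (Fin r → Finset α × ℕ) → β) :
    ∑ f ∈ (Fintype.piFinset fun _ : Fin r => S.powerset ×ˢ Finset.range (1 + 1)).filter
        (fun f => (∀ i, ((f i).1).Nonempty) ∧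
          (∀ i j, i ≠ j → Disjoint (f i).1 (f j).1) ∧
          (Finset.univ.biUnion fun i => (f i).1) = S ∧
          ∑ i, (f i).2 = 1), F f
      = ∑ g ∈ orderedPartitions r S, ∑ i, F fun j => (g j, (Pi.single i 1 : Fin r → ℕ) j) := by
  rw [← sum_product']
  symm
  refine sum_bij (fun x _ j => (x.1 j, (Pi.single x.2 1 : Fin r → ℕ) j)) ?_ ?_ ?_
    (fun _ _ => rfl)
  · rintro ⟨g, i⟩ hx
    obtain ⟨hne, hdisj, hcov⟩ := mem_orderedPartitions.mp (mem_product.mp hx).1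
    refine mem_filter.mpr ⟨Fintype.mem_piFinset.mpr fun j => mem_product.mpr ⟨?_, ?_⟩,
      hne, hdisj, hcov, by simp⟩
    · exact mem_powerset.mpr (hcov ▸ subset_biUnion_of_mem g (mem_univ j))
    · exact mem_range.mpr (by rcases eq_or_ne j i with rfl | hj <;> simp [*])
  · rintro ⟨g, i⟩ - ⟨g', i'⟩ - h
    simp only [funext_iff, Prod.ext_iff] at h
    refine Prod.ext (funext fun j => (h j).1) ?_
    by_contra hii
    simpa [Pi.single_eq_of_ne hii] using (h i).2
  · intro f hf
    obtain ⟨-, hne, hdisj, hcov, hsum⟩ := mem_filter.mp hf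
    obtain ⟨i, hi⟩ := exists_eq_pi_single_of_sum_eq_one hsum
    refine ⟨(fun j => (f j).1, i),
      mem_product.mpr ⟨mem_orderedPartitions.mpr ⟨hne, hdisj, hcov⟩, mem_univ i⟩,
      funext fun j => Prod.ext rfl ?_⟩
    simp [← hi]

theorem prod_eval_pi_single {P : ℕ → ℝ[X]} (hP0 : ∀ x, (P 0).eval x = 1) {r : ℕ}
    (t : Fin r → ℝ) (i : Fin r) :
    ∏ j, (P ((Pi.single i 1 : Fin r → ℕ) j)).eval (t j) = (P 1).eval (t i) := by
  rw [Fintype.prod_eq_single i fun j hj => by rw [Pi.single_eq_of_ne hj, hP0], Pi.single_eq_same]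

theorem weightedConfigSum_one {P : ℕ → ℝ[X]} (hP0 : ∀ x, (P 0).eval x = 1) (S : Finset ℝ) :
    weightedConfigSum P S 1 =
      -∑ B ∈ S.powerset.filter Finset.Nonempty, (-1) ^ #(S \ B) * (P 1).eval (∑ c ∈ B, c) := by
  have hterm (r : ℕ) : (-1 : ℝ) ^ (r + 1) * (1 / (r + 1 : ℕ)) *
      ∑ g ∈ orderedPartitions (r + 1) S, ∑ i, (P 1).eval (∑ c ∈ g i, c) =
      -∑ B ∈ S.powerset.filter Finset.Nonempty,
        (-1) ^ r * #(orderedPartitions r (S \ B)) * (P 1).eval (∑ c ∈ B, c) := by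
    rw [sum_orderedPartitions_sum_apply r S fun B => (P 1).eval (∑ c ∈ B, c), nsmul_eq_mul,
      mul_sum, mul_sum, ← sum_neg_distrib]
    refine sum_congr rfl fun B _ => ?_
    rw [nsmul_eq_mul]
    field_simp
    ring
  have hcount (B) (hB : B ∈ S.powerset.filter Finset.Nonempty) :
      ∑ r ∈ range #S, (-1 : ℝ) ^ r * #(orderedPartitions r (S \ B)) = (-1) ^ #(S \ B) := by
    obtain ⟨hBS, hB⟩ := mem_filter.mp hB
    exact_mod_cast sum_range_neg_one_pow_mul_card_orderedPartitions (S \ B)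
      (card_lt_card (sdiff_ssubset (mem_powerset.mp hBS) hB))
  unfold weightedConfigSum
  simp only [sum_weight_one_configurations, prod_eval_pi_single hP0, ← mul_sum]
  -- the `r = 0` term carries the factor `1 / 0 = 0`
  rw [sum_range_succ', Nat.cast_zero, div_zero, mul_zero, zero_mul, add_zero,
    sum_congr rfl fun r _ => hterm r, sum_neg_distrib, sum_comm]
  refine congrArg _ (sum_congr rfl fun B hB => ?_)
  rw [← hcount B hB, sum_mul]

theorem weightedConfigSum_one_eq_zero {P : ℕ → ℝ[X]} (hP : IsStirlingPoly P) {S : Finset ℝ}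
    (hS : 3 ≤ #S) : weightedConfigSum P S 1 = 0 := by
  rw [weightedConfigSum_one hP.eval_zero, neg_eq_zero, filter_nonempty_powerset,
    sum_erase _ (by simp [hP.eval_one])]
  calc ∑ B ∈ S.powerset, (-1) ^ #(S \ B) * (P 1).eval (∑ c ∈ B, c)
      = (-1) ^ #S * ∑ B ∈ S.powerset, (-1) ^ #B * (P 1).eval (∑ c ∈ B, c) := by
        rw [mul_sum]
        exact sum_congr rfl fun B hB => by
          rw [neg_one_pow_card_sdiff (mem_powerset.mp hB), mul_assoc]
    _ = 0 := by
        rw [sum_powerset_neg_one_pow_card_mul_eval_eq_zero S (P 1) (by have := (hP 1).1; omega),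
          mul_zero]

theorem weighted_config_identity_g6_w1 (P : ℕ → Polynomial ℝ) (hP : IsStirlingPoly P)
    (S : Finset ℝ) (hS : S.card = 6) :
    weightedConfigSum P S 1 = 0 :=
  weightedConfigSum_one_eq_zero hP (by omega)
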